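/- In L_excore, for a propagator a₁ : P → Y, pure u₁ : X → P, a propagator a₂ : X → Y, and the catcher f₁ = a₁ ∘ untag ∘ tag ∘ u₁ : X → Y: the weak equation f₁ ∼ a₂ is T_excore-equivalent to a₁ ∘ u₁ ≡ a₂, and the strong equation f₁ ≡ a₂ is T_excore-equivalent to the pair {a₁ ∘ u₁ ≡ a₂, a₁ ≡ []_Y ∘ tag}. -/
import Mathlib


/-! The decorated logic for the core language for exceptions `L_excore`.
Types are elements of `Ty`, with a distinguished type `Par` of parameters and an
empty type `Emp` (written `0` in the paper); `Sig` is a signature of pure operations.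
`tag : Par → Emp` is a propagator and `untag : Emp → Par` is a catcher. -/

inductive CoTm (Ty : Type) (Par Emp : Ty) (Sig : Ty → Ty → Type) : Ty → Ty → Type where
  | id (X : Ty) : CoTm Ty Par Emp Sig X X
  | comp {X Y Z : Ty} (g : CoTm Ty Par Emp Sig Y Z) (f : CoTm Ty Par Emp Sig X Y) :
      CoTm Ty Par Emp Sig X Z
  | gen {X Y : Ty} (s : Sig X Y) : CoTm Ty Par Emp Sig X Y
  | fromEmpty (Y : Ty) : CoTm Ty Par Emp Sig Emp Y
  | tag : CoTm Ty Par Emp Sig Par Emp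
  | untag : CoTm Ty Par Emp Sig Emp Par

variable {Ty : Type} {Par Emp : Ty} {Sig : Ty → Ty → Type}

/-- The pure terms of `L_excore`. -/
inductive CoPure : ∀ {X Y : Ty}, CoTm Ty Par Emp Sig X Y → Prop where
  | id (X : Ty) : CoPure (CoTm.id X)
  | comp {X Y Z : Ty} {g : CoTm Ty Par Emp Sig Y Z} {f : CoTm Ty Par Emp Sig X Y} :
      CoPure g → CoPure f → CoPure (CoTm.comp g f)
  | gen {X Y : Ty} (s : Sig X Y) : CoPure (CoTm.gen (Par := Par) (Emp := Emp) s)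
  | fromEmpty (Y : Ty) : CoPure (CoTm.fromEmpty (Par := Par) (Sig := Sig) Y)

/-- The propagators of `L_excore`: terms not containing `untag`
(all terms are catchers). -/
inductive CoPpg : ∀ {X Y : Ty}, CoTm Ty Par Emp Sig X Y → Prop where
  | id (X : Ty) : CoPpg (CoTm.id X)
  | comp {X Y Z : Ty} {g : CoTm Ty Par Emp Sig Y Z} {f : CoTm Ty Par Emp Sig X Y} :
      CoPpg g → CoPpg f → CoPpg (CoTm.comp g f)
  | gen {X Y : Ty} (s : Sig X Y) : CoPpg (CoTm.gen (Par := Par) (Emp := Emp) s)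
  | fromEmpty (Y : Ty) : CoPpg (CoTm.fromEmpty (Par := Par) (Sig := Sig) Y)
  | tag : CoPpg (CoTm.tag (Sig := Sig))

/-- A decorated equation of `L_excore`: a pair of parallel terms together with a
`Bool` which is `true` for a strong equation `≡` and `false` for a weak equation `∼`. -/
def CoEqn (Ty : Type) (Par Emp : Ty) (Sig : Ty → Ty → Type) : Type :=
  Σ X : Ty, Σ Y : Ty, (CoTm Ty Par Emp Sig X Y × CoTm Ty Par Emp Sig X Y) × Bool

mutual
/-- Derivable strong equations of `L_excore` from the axiom set `Ax`. -/
inductive CoSEq (Ax : Set (CoEqn Ty Par Emp Sig)) :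
    ∀ {X Y : Ty}, CoTm Ty Par Emp Sig X Y → CoTm Ty Par Emp Sig X Y → Prop where
  | ax {X Y : Ty} {f g : CoTm Ty Par Emp Sig X Y} :
      (⟨X, Y, (f, g), true⟩ : CoEqn Ty Par Emp Sig) ∈ Ax → CoSEq Ax f g
  | refl {X Y : Ty} (f : CoTm Ty Par Emp Sig X Y) : CoSEq Ax f f
  | symm {X Y : Ty} {f g : CoTm Ty Par Emp Sig X Y} : CoSEq Ax f g → CoSEq Ax g f
  | trans {X Y : Ty} {f g h : CoTm Ty Par Emp Sig X Y} :
      CoSEq Ax f g → CoSEq Ax g h → CoSEq Ax f h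
  | subs {X Y Z : Ty} (u : CoTm Ty Par Emp Sig X Y) {v₁ v₂ : CoTm Ty Par Emp Sig Y Z} :
      CoSEq Ax v₁ v₂ → CoSEq Ax (v₁.comp u) (v₂.comp u)
  | repl {X Y Z : Ty} {v₁ v₂ : CoTm Ty Par Emp Sig X Y} (w : CoTm Ty Par Emp Sig Y Z) :
      CoSEq Ax v₁ v₂ → CoSEq Ax (w.comp v₁) (w.comp v₂)
  | idLeft {X Y : Ty} (f : CoTm Ty Par Emp Sig X Y) : CoSEq Ax ((CoTm.id Y).comp f) f
  | idRight {X Y : Ty} (f : CoTm Ty Par Emp Sig X Y) : CoSEq Ax (f.comp (CoTm.id X)) f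
  | assoc {W X Y Z : Ty} (h : CoTm Ty Par Emp Sig Y Z) (g : CoTm Ty Par Emp Sig X Y)
      (f : CoTm Ty Par Emp Sig W X) : CoSEq Ax ((h.comp g).comp f) (h.comp (g.comp f))
  -- (initial) of the pure sublogic `L_eqn`:
  | initialPure {Y : Ty} {u : CoTm Ty Par Emp Sig Emp Y} :
      CoPure u → CoSEq Ax u (CoTm.fromEmpty Y)
  -- (eq₁): a weak equation between propagators is strong
  | eq₁ {X Y : Ty} {f g : CoTm Ty Par Emp Sig X Y} :
      CoPpg f → CoPpg g → CoWEq Ax f g → CoSEq Ax f g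
  -- (eq₂)
  | eq₂ {X Y : Ty} {f g : CoTm Ty Par Emp Sig X Y} :
      CoWEq Ax f g → CoSEq Ax (f.comp (CoTm.fromEmpty X)) (g.comp (CoTm.fromEmpty X)) →
      CoSEq Ax f g
  -- (eq₃)
  | eq₃ {X : Ty} {f g : CoTm Ty Par Emp Sig Emp X} :
      CoWEq Ax (f.comp CoTm.tag) (g.comp CoTm.tag) → CoSEq Ax f g

/-- Derivable weak equations of `L_excore` from the axiom set `Ax`. -/
inductive CoWEq (Ax : Set (CoEqn Ty Par Emp Sig)) :
    ∀ {X Y : Ty}, CoTm Ty Par Emp Sig X Y → CoTm Ty Par Emp Sig X Y → Prop where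
  | ax {X Y : Ty} {f g : CoTm Ty Par Emp Sig X Y} :
      (⟨X, Y, (f, g), false⟩ : CoEqn Ty Par Emp Sig) ∈ Ax → CoWEq Ax f g
  | symm {X Y : Ty} {f g : CoTm Ty Par Emp Sig X Y} : CoWEq Ax f g → CoWEq Ax g f
  | trans {X Y : Ty} {f g h : CoTm Ty Par Emp Sig X Y} :
      CoWEq Ax f g → CoWEq Ax g h → CoWEq Ax f h
  -- (subs_∼): substitution only by pure terms
  | subsPure {X Y Z : Ty} {u : CoTm Ty Par Emp Sig X Y} {v₁ v₂ : CoTm Ty Par Emp Sig Y Z} :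
      CoPure u → CoWEq Ax v₁ v₂ → CoWEq Ax (v₁.comp u) (v₂.comp u)
  -- (repl_∼): replacement by arbitrary terms
  | repl {X Y Z : Ty} {v₁ v₂ : CoTm Ty Par Emp Sig X Y} (w : CoTm Ty Par Emp Sig Y Z) :
      CoWEq Ax v₁ v₂ → CoWEq Ax (w.comp v₁) (w.comp v₂)
  -- (empty_∼)
  | empty {Y : Ty} (f : CoTm Ty Par Emp Sig Emp Y) : CoWEq Ax f (CoTm.fromEmpty Y)
  -- (≡-to-∼)
  | ofStrong {X Y : Ty} {f g : CoTm Ty Par Emp Sig X Y} : CoSEq Ax f g → CoWEq Ax f g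
  -- (ax): untag ∘ tag ∼ id_P
  | untag_tag : CoWEq Ax ((CoTm.untag (Sig := Sig)).comp CoTm.tag) (CoTm.id Par)
end

/-- Two sets of decorated equations are `T_excore`-equivalent over `Ax` when they
generate the same theory (same strong and weak theorems) over `Ax`. -/
def CoEquiv (Ax E₁ E₂ : Set (CoEqn Ty Par Emp Sig)) : Prop :=
  ∀ (X Y : Ty) (f g : CoTm Ty Par Emp Sig X Y),
    (CoSEq (Ax ∪ E₁) f g ↔ CoSEq (Ax ∪ E₂) f g) ∧
    (CoWEq (Ax ∪ E₁) f g ↔ CoWEq (Ax ∪ E₂) f g)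

/-- `Ax` is a pure (strong) theory: all axioms are strong equations between pure terms. -/
def CoPureAx (Ax : Set (CoEqn Ty Par Emp Sig)) : Prop :=
  ∀ e ∈ Ax, CoPure e.2.2.1.1 ∧ CoPure e.2.2.1.2 ∧ e.2.2.2 = true

/-! ### Auxiliary lemmas -/

theorem CoPure.ppg {X Y : Ty} {f : CoTm Ty Par Emp Sig X Y} (h : CoPure f) : CoPpg f := by
  induction h with
  | id X => exact CoPpg.id X
  | comp _ _ ih ih' => exact CoPpg.comp ih ih'
  | gen s => exact CoPpg.gen s
  | fromEmpty Y => exact CoPpg.fromEmpty Y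

/-- Monotonicity / admissibility of translation between axiom sets. -/
theorem coSEq_mono {Ax₁ Ax₂ : Set (CoEqn Ty Par Emp Sig)}
    (hyp : ∀ e ∈ Ax₁, (e.2.2.2 = true → CoSEq Ax₂ e.2.2.1.1 e.2.2.1.2) ∧
        (e.2.2.2 = false → CoWEq Ax₂ e.2.2.1.1 e.2.2.1.2))
    {X Y : Ty} {f g : CoTm Ty Par Emp Sig X Y} (h : CoSEq Ax₁ f g) : CoSEq Ax₂ f g :=
  CoSEq.rec (Ax := Ax₁)
    (motive_1 := fun {_ _} f g _ => CoSEq Ax₂ f g)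
    (motive_2 := fun {_ _} f g _ => CoWEq Ax₂ f g)
    (@fun _ _ _ _ hm => (hyp _ hm).1 rfl)
    (@fun _ _ f => .refl f)
    (@fun _ _ _ _ _ ih => ih.symm)
    (@fun _ _ _ _ _ _ _ ih ih' => ih.trans ih')
    (@fun _ _ _ u _ _ _ ih => .subs u ih)
    (@fun _ _ _ _ _ w _ ih => .repl w ih)
    (@fun _ _ f => .idLeft f)
    (@fun _ _ f => .idRight f)
    (@fun _ _ _ _ h g f => .assoc h g f)
    (@fun _ _ hp => .initialPure hp)
    (@fun _ _ _ _ hf hg _ ih => .eq₁ hf hg ih)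
    (@fun _ _ _ _ _ _ ihw ihs => .eq₂ ihw ihs)
    (@fun _ _ _ _ ih => .eq₃ ih)
    (@fun _ _ _ _ hm => (hyp _ hm).2 rfl)
    (@fun _ _ _ _ _ ih => ih.symm)
    (@fun _ _ _ _ _ _ _ ih ih' => ih.trans ih')
    (@fun _ _ _ _ _ _ hu _ ih => .subsPure hu ih)
    (@fun _ _ _ _ _ w _ ih => .repl w ih)
    (@fun _ f => .empty f)
    (@fun _ _ _ _ _ ih => .ofStrong ih)
    (.untag_tag)
    h

theorem coWEq_mono {Ax₁ Ax₂ : Set (CoEqn Ty Par Emp Sig)}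
    (hyp : ∀ e ∈ Ax₁, (e.2.2.2 = true → CoSEq Ax₂ e.2.2.1.1 e.2.2.1.2) ∧
        (e.2.2.2 = false → CoWEq Ax₂ e.2.2.1.1 e.2.2.1.2))
    {X Y : Ty} {f g : CoTm Ty Par Emp Sig X Y} (h : CoWEq Ax₁ f g) : CoWEq Ax₂ f g :=
  CoWEq.rec (Ax := Ax₁)
    (motive_1 := fun {_ _} f g _ => CoSEq Ax₂ f g)
    (motive_2 := fun {_ _} f g _ => CoWEq Ax₂ f g)
    (@fun _ _ _ _ hm => (hyp _ hm).1 rfl)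
    (@fun _ _ f => .refl f)
    (@fun _ _ _ _ _ ih => ih.symm)
    (@fun _ _ _ _ _ _ _ ih ih' => ih.trans ih')
    (@fun _ _ _ u _ _ _ ih => .subs u ih)
    (@fun _ _ _ _ _ w _ ih => .repl w ih)
    (@fun _ _ f => .idLeft f)
    (@fun _ _ f => .idRight f)
    (@fun _ _ _ _ h g f => .assoc h g f)
    (@fun _ _ hp => .initialPure hp)
    (@fun _ _ _ _ hf hg _ ih => .eq₁ hf hg ih)
    (@fun _ _ _ _ _ _ ihw ihs => .eq₂ ihw ihs)
    (@fun _ _ _ _ ih => .eq₃ ih)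
    (@fun _ _ _ _ hm => (hyp _ hm).2 rfl)
    (@fun _ _ _ _ _ ih => ih.symm)
    (@fun _ _ _ _ _ _ _ ih ih' => ih.trans ih')
    (@fun _ _ _ _ _ _ hu _ ih => .subsPure hu ih)
    (@fun _ _ _ _ _ w _ ih => .repl w ih)
    (@fun _ f => .empty f)
    (@fun _ _ _ _ _ ih => .ofStrong ih)
    (.untag_tag)
    h

/-- Every propagator `0 → Y` is strongly equal to `[]_Y`. -/
theorem ppg_empty {Ax : Set (CoEqn Ty Par Emp Sig)} {Y : Ty} {f : CoTm Ty Par Emp Sig Emp Y}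
    (hf : CoPpg f) : CoSEq Ax f (CoTm.fromEmpty Y) :=
  CoSEq.eq₁ hf (CoPpg.fromEmpty Y) (CoWEq.empty f)

/-- The fundamental derived equation `tag ∘ untag ≡ id_0`. -/
theorem tag_untag {Ax : Set (CoEqn Ty Par Emp Sig)} :
    CoSEq Ax ((CoTm.tag (Sig := Sig)).comp CoTm.untag) (CoTm.id Emp) := by
  apply CoSEq.eq₃
  refine (CoWEq.ofStrong (CoSEq.assoc _ _ _)).trans ?_
  refine (CoWEq.repl CoTm.tag CoWEq.untag_tag).trans ?_
  exact CoWEq.ofStrong ((CoSEq.idRight _).trans (CoSEq.idLeft _).symm)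

/-- `f₁ ∼ a₁ ∘ u₁` in any theory. -/
theorem fone_weak {Ax : Set (CoEqn Ty Par Emp Sig)} {X Y : Ty}
    (a₁ : CoTm Ty Par Emp Sig Par Y) {u₁ : CoTm Ty Par Emp Sig X Par} (hu₁ : CoPure u₁) :
    CoWEq Ax (a₁.comp (CoTm.untag.comp (CoTm.tag.comp u₁))) (a₁.comp u₁) := by
  apply CoWEq.repl a₁
  have h1 : CoWEq Ax ((CoTm.untag.comp CoTm.tag).comp u₁) ((CoTm.id Par).comp u₁) :=
    CoWEq.subsPure hu₁ CoWEq.untag_tag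
  exact ((CoWEq.ofStrong (CoSEq.assoc _ _ _)).symm.trans h1).trans
    (CoWEq.ofStrong (CoSEq.idLeft _))

/-- `f₁ ∘ []_X ≡ a₁ ∘ untag` in any theory. -/
theorem fone_comp_empty {Ax : Set (CoEqn Ty Par Emp Sig)} {X Y : Ty}
    (a₁ : CoTm Ty Par Emp Sig Par Y) {u₁ : CoTm Ty Par Emp Sig X Par} (hu₁ : CoPure u₁) :
    CoSEq Ax ((a₁.comp (CoTm.untag.comp (CoTm.tag.comp u₁))).comp (CoTm.fromEmpty X))
      (a₁.comp CoTm.untag) := by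
  have s4 : CoSEq Ax (CoTm.tag.comp (u₁.comp (CoTm.fromEmpty X))) (CoTm.id Emp) :=
    (ppg_empty (CoPpg.comp CoPpg.tag (CoPpg.comp hu₁.ppg (CoPpg.fromEmpty X)))).trans
      (ppg_empty (CoPpg.id Emp)).symm
  refine (CoSEq.assoc _ _ _).trans ?_
  refine (CoSEq.repl a₁ (CoSEq.assoc _ _ _)).trans ?_
  refine (CoSEq.repl a₁ (CoSEq.repl CoTm.untag (CoSEq.assoc _ _ _))).trans ?_
  refine (CoSEq.repl a₁ (CoSEq.repl CoTm.untag s4)).trans ?_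
  exact CoSEq.repl a₁ (CoSEq.idRight _)

theorem union_hyp {Ax Ax₂ E : Set (CoEqn Ty Par Emp Sig)} (hAx : Ax ⊆ Ax₂)
    (hE : ∀ e ∈ E, (e.2.2.2 = true → CoSEq Ax₂ e.2.2.1.1 e.2.2.1.2) ∧
        (e.2.2.2 = false → CoWEq Ax₂ e.2.2.1.1 e.2.2.1.2)) :
    ∀ e ∈ Ax ∪ E, (e.2.2.2 = true → CoSEq Ax₂ e.2.2.1.1 e.2.2.1.2) ∧
        (e.2.2.2 = false → CoWEq Ax₂ e.2.2.1.1 e.2.2.1.2) := by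
  rintro e (he | he)
  · obtain ⟨A, B, ⟨p, q⟩, b⟩ := e
    refine ⟨fun hb => ?_, fun hb => ?_⟩ <;> subst hb
    · exact CoSEq.ax (hAx he)
    · exact CoWEq.ax (hAx he)
  · exact hE e he

theorem coEquiv_of_hyp {Ax E₁ E₂ : Set (CoEqn Ty Par Emp Sig)}
    (h₁ : ∀ e ∈ E₁, (e.2.2.2 = true → CoSEq (Ax ∪ E₂) e.2.2.1.1 e.2.2.1.2) ∧
        (e.2.2.2 = false → CoWEq (Ax ∪ E₂) e.2.2.1.1 e.2.2.1.2))
    (h₂ : ∀ e ∈ E₂, (e.2.2.2 = true → CoSEq (Ax ∪ E₁) e.2.2.1.1 e.2.2.1.2) ∧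
        (e.2.2.2 = false → CoWEq (Ax ∪ E₁) e.2.2.1.1 e.2.2.1.2)) :
    CoEquiv Ax E₁ E₂ := by
  intro A B p q
  have H₁ := union_hyp (fun e he => Or.inl he) h₁
  have H₂ := union_hyp (fun e he => Or.inl he) h₂
  exact ⟨⟨coSEq_mono H₁, coSEq_mono H₂⟩, ⟨coWEq_mono H₁, coWEq_mono H₂⟩⟩

/-- In `L_excore`, for a propagator `a₁ : P → Y`, pure `u₁ : X → P`,
a propagator `a₂ : X → Y`, and the catcher `f₁ = a₁ ∘ untag ∘ tag ∘ u₁ : X → Y`: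
`f₁ ∼ a₂` is `T_excore`-equivalent to `a₁ ∘ u₁ ≡ a₂`, and `f₁ ≡ a₂` is
`T_excore`-equivalent to the pair `{a₁ ∘ u₁ ≡ a₂, a₁ ≡ []_Y ∘ tag}`. -/
theorem coexc_catcher_ppg_eqns (Ax : Set (CoEqn Ty Par Emp Sig)) (hAx : CoPureAx Ax)
    {X Y : Ty} (a₁ : CoTm Ty Par Emp Sig Par Y) (u₁ : CoTm Ty Par Emp Sig X Par)
    (a₂ : CoTm Ty Par Emp Sig X Y)
    (ha₁ : CoPpg a₁) (hu₁ : CoPure u₁) (ha₂ : CoPpg a₂) :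
    CoEquiv Ax
      {(⟨X, Y, (a₁.comp (CoTm.untag.comp (CoTm.tag.comp u₁)), a₂), false⟩ : CoEqn Ty Par Emp Sig)}
      {(⟨X, Y, (a₁.comp u₁, a₂), true⟩ : CoEqn Ty Par Emp Sig)} ∧
    CoEquiv Ax
      {(⟨X, Y, (a₁.comp (CoTm.untag.comp (CoTm.tag.comp u₁)), a₂), true⟩ : CoEqn Ty Par Emp Sig)}
      ({(⟨X, Y, (a₁.comp u₁, a₂), true⟩ : CoEqn Ty Par Emp Sig)} ∪
       {(⟨Par, Y, (a₁, (CoTm.fromEmpty Y).comp CoTm.tag), true⟩ : CoEqn Ty Par Emp Sig)}) := by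
  refine ⟨coEquiv_of_hyp ?_ ?_, coEquiv_of_hyp ?_ ?_⟩
  · -- part 1, E₁ in Ax ∪ E₂
    rintro e rfl
    refine ⟨fun h => (nomatch h), fun _ => ?_⟩
    exact (fone_weak a₁ hu₁).trans (CoWEq.ofStrong (CoSEq.ax (Or.inr rfl)))
  · -- part 1, E₂ in Ax ∪ E₁
    rintro e rfl
    refine ⟨fun _ => ?_, fun h => nomatch h⟩
    exact CoSEq.eq₁ (CoPpg.comp ha₁ hu₁.ppg) ha₂
      ((fone_weak a₁ hu₁).symm.trans (CoWEq.ax (Or.inr rfl)))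
  · -- part 2, E₁' in Ax ∪ E₂'
    rintro e rfl
    refine ⟨fun _ => ?_, fun h => nomatch h⟩
    have hax1 : CoSEq (Ax ∪ ({(⟨X, Y, (a₁.comp u₁, a₂), true⟩ : CoEqn Ty Par Emp Sig)} ∪
        {(⟨Par, Y, (a₁, (CoTm.fromEmpty Y).comp CoTm.tag), true⟩ : CoEqn Ty Par Emp Sig)}))
        (a₁.comp u₁) a₂ := CoSEq.ax (Or.inr (Or.inl rfl))
    have hax2 : CoSEq (Ax ∪ ({(⟨X, Y, (a₁.comp u₁, a₂), true⟩ : CoEqn Ty Par Emp Sig)} ∪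
        {(⟨Par, Y, (a₁, (CoTm.fromEmpty Y).comp CoTm.tag), true⟩ : CoEqn Ty Par Emp Sig)}))
        a₁ ((CoTm.fromEmpty Y).comp CoTm.tag) := CoSEq.ax (Or.inr (Or.inr rfl))
    refine CoSEq.eq₂ ((fone_weak a₁ hu₁).trans (CoWEq.ofStrong hax1)) ?_
    have h2 : CoSEq _ (a₁.comp CoTm.untag) (CoTm.fromEmpty Y) :=
      (CoSEq.subs CoTm.untag hax2).trans (((CoSEq.assoc _ _ _).trans
        (CoSEq.repl _ tag_untag)).trans (CoSEq.idRight _))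
    exact ((fone_comp_empty a₁ hu₁).trans h2).trans
      (ppg_empty (CoPpg.comp ha₂ (CoPpg.fromEmpty X))).symm
  · -- part 2, E₂' in Ax ∪ E₁'
    rintro e (rfl | rfl)
    · refine ⟨fun _ => ?_, fun h => nomatch h⟩
      exact CoSEq.eq₁ (CoPpg.comp ha₁ hu₁.ppg) ha₂
        ((fone_weak a₁ hu₁).symm.trans (CoWEq.ofStrong (CoSEq.ax (Or.inr rfl))))
    · refine ⟨fun _ => ?_, fun h => nomatch h⟩
      have hax : CoSEq (Ax ∪ {(⟨X, Y, (a₁.comp (CoTm.untag.comp (CoTm.tag.comp u₁)), a₂),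
          true⟩ : CoEqn Ty Par Emp Sig)})
          (a₁.comp (CoTm.untag.comp (CoTm.tag.comp u₁))) a₂ := CoSEq.ax (Or.inr rfl)
      have h1 : CoSEq _ (a₁.comp CoTm.untag) (CoTm.fromEmpty Y) :=
        ((fone_comp_empty a₁ hu₁).symm.trans (CoSEq.subs _ hax)).trans
          (ppg_empty (CoPpg.comp ha₂ (CoPpg.fromEmpty X)))
      refine CoSEq.eq₁ ha₁ (CoPpg.comp (CoPpg.fromEmpty Y) CoPpg.tag) ?_
      have w1 : CoWEq (Ax ∪ {(⟨X, Y, (a₁.comp (CoTm.untag.comp (CoTm.tag.comp u₁)), a₂),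
          true⟩ : CoEqn Ty Par Emp Sig)}) a₁ (a₁.comp (CoTm.untag.comp CoTm.tag)) :=
        ((CoWEq.repl a₁ CoWEq.untag_tag).trans (CoWEq.ofStrong (CoSEq.idRight a₁))).symm
      exact w1.trans (CoWEq.ofStrong ((CoSEq.assoc _ _ _).symm.trans
        (CoSEq.subs CoTm.tag h1)))
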